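/- arXiv:1404.4004 — 4 statements merged into one kernel-verified Lean document; each statement's English description precedes it below -/
import Mathlib

section
/- In the n-dimensional hypertorus of arity l, if (s₁,...,s_k) ∈ R_j ↾ k with k ∈ {2,...,l}, then for every permutation σ of {1,...,k} and every index i ∈ {1,...,n} with i ≠ j, the permuted tuple (s_{σ(1)},...,s_{σ(k)}) is not in R_i ↾ k. -/
/-- The hypertorus point set, represented as residues. -/
abbrev TorusPt (n l : ℕ) := ZMod n × ZMod l × ZMod 3

def Good (n l : ℕ) [NeZero l] (j : ZMod n)
    (t : Fin l → TorusPt n l) : Prop :=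
  ∀ i : Fin l, i ≠ 0 →
    (t i).1 - (t 0).1 = j ∧
    (t i).2.1 - (t 0).2.1 = ((i : ℕ) : ZMod l) ∧
    (t i).2.2 - (t 0).2.2 = 1

/-- The relation `R_j ⊆ T^l` of the hypertorus. -/
def Rrel (n l : ℕ) [NeZero l] (j : ZMod n) : Set (Fin l → TorusPt n l) :=
  {t | Good n l j t}

/-- `k`-restriction of an `l`-ary relation: the set of `k`-prefixes. -/
def restrict {S : Type*} {l k : ℕ} (h : k ≤ l) (R : Set (Fin l → S)) :
    Set (Fin k → S) :=
  {s | ∃ t ∈ R, ∀ i : Fin k, s i = t (Fin.castLE h i)}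

/-!
The third coordinate tells the first entry of a tuple of `R_j ↾ k` apart: every other entry
exceeds it by `1` mod `3`. If `σ` moved the first entry, the entries `s (σ 0)` and `s 0` would
each exceed the other by `1`, forcing `2 = 0` in `ZMod 3`. So `σ` fixes the first entry, and
then the first coordinate of any other entry of `s ∘ σ` reads off `i = j`.
-/

section RestrictRrel

variable {n l k : ℕ} [NeZero l] [NeZero k] {hkl : k ≤ l} {j : ZMod n} {s : Fin k → TorusPt n l}

lemma Fin.castLE_ne_zero {p : Fin k} (hp : p ≠ 0) : Fin.castLE hkl p ≠ 0 :=
  fun h => hp (Fin.ext (by simpa using congrArg Fin.val h))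

lemma mem_restrict_Rrel_sub (hs : s ∈ restrict hkl (Rrel n l j)) {p : Fin k} (hp : p ≠ 0) :
    (s p).1 - (s 0).1 = j ∧ (s p).2.2 - (s 0).2.2 = 1 := by
  obtain ⟨t, ht, hst⟩ := hs
  obtain ⟨hfst, -, hthird⟩ := ht _ (Fin.castLE_ne_zero hp)
  rw [hst p, hst 0]
  exact ⟨hfst, hthird⟩

lemma perm_zero_eq_zero_of_mem_restrict_Rrel {i : ZMod n} {σ : Equiv.Perm (Fin k)}
    (hs : s ∈ restrict hkl (Rrel n l j)) (hσs : s ∘ σ ∈ restrict hkl (Rrel n l i)) :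
    σ 0 = 0 := by
  by_contra hσ0
  have hm : σ.symm 0 ≠ 0 := fun h => hσ0 (σ.symm_apply_eq.mp h).symm
  have h_up := (mem_restrict_Rrel_sub hs hσ0).2
  have h_down := (mem_restrict_Rrel_sub hσs hm).2
  simp only [Function.comp_apply, Equiv.apply_symm_apply] at h_down
  have h_two : (0 : ZMod 3) = 2 := by linear_combination h_up + h_down
  exact absurd h_two (by decide)

end RestrictRrel

theorem stmt2_general (n l k : ℕ) [NeZero l]
    (hk : 2 ≤ k) (hkl : k ≤ l) (j : ZMod n)
    (s : Fin k → TorusPt n l) (hs : s ∈ restrict hkl (Rrel n l j))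
    (σ : Equiv.Perm (Fin k)) (i : ZMod n) (hij : i ≠ j) :
    (fun m => s (σ m)) ∉ restrict hkl (Rrel n l i) := by
  have : NeZero k := ⟨by omega⟩
  intro hσs
  have hσ0 : σ 0 = 0 := perm_zero_eq_zero_of_mem_restrict_Rrel hs hσs
  have h1 : (1 : Fin k) ≠ 0 := by
    simp [Fin.ext_iff, Nat.one_mod_eq_one.mpr (by omega : k ≠ 1)]
  have hσ1 : σ 1 ≠ 0 := fun h => h1 (σ.injective (h.trans hσ0.symm))
  have hi := (mem_restrict_Rrel_sub hσs h1).1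
  have hj := (mem_restrict_Rrel_sub hs hσ1).1
  simp only [hσ0] at hi
  exact hij (hi.symm.trans hj)

theorem stmt2 (n l k : ℕ) [NeZero n] [NeZero l] (hn : 2 ≤ n) (hl : 2 ≤ l)
    (hk : 2 ≤ k) (hkl : k ≤ l) (j : ZMod n)
    (s : Fin k → TorusPt n l) (hs : s ∈ restrict hkl (Rrel n l j))
    (σ : Equiv.Perm (Fin k)) (i : ZMod n) (hij : i ≠ j) :
    (fun m => s (σ m)) ∉ restrict hkl (Rrel n l i) :=
  stmt2_general n l k hk hkl j s hs σ i hij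
end

section
/- In the n-dimensional hypertorus of arity l, if (s₁,...,s_k) ∈ R_j ↾ k with k ∈ {2,...,l}, then for every permutation μ of {1,...,k} other than the identity, the permuted tuple (s_{μ(1)},...,s_{μ(k)}) is not in R_j ↾ k. -/
lemma Fin.natCast_zmod_injective {k l : ℕ} (hkl : k ≤ l) :
    Function.Injective fun i : Fin k => ((i : ℕ) : ZMod l) := by
  intro a b hab
  have hval := congrArg ZMod.val hab
  simp only [ZMod.val_natCast_of_lt (a.isLt.trans_le hkl),
    ZMod.val_natCast_of_lt (b.isLt.trans_le hkl)] at hval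
  exact Fin.ext hval

lemma Equiv.Perm.apply_eq_self_of_sub_eq {α G : Type*} [AddGroup G] {c : G} (hc : c + c ≠ 0)
    {a : α} {f : α → G} {μ : Equiv.Perm α} (hf : ∀ x ≠ a, f x - f a = c)
    (hfμ : ∀ x ≠ a, f (μ x) - f (μ a) = c) : μ a = a := by
  by_contra hμa
  have hback : f a - f (μ a) = c := by
    simpa using hfμ (μ.symm a) (μ.symm_apply_eq.not.mpr (Ne.symm hμa))
  exact hc (by rw [← sub_self (f (μ a)), ← sub_add_sub_cancel _ (f a), hf _ hμa, hback])

lemma Equiv.Perm.eq_one_of_sub_eq_natCast {k l : ℕ} [NeZero k] (hkl : k ≤ l)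
    {f : Fin k → ZMod l} {μ : Equiv.Perm (Fin k)} (hμ0 : μ 0 = 0)
    (hf : ∀ i ≠ 0, f i - f 0 = ((i : ℕ) : ZMod l))
    (hfμ : ∀ i ≠ 0, f (μ i) - f (μ 0) = ((i : ℕ) : ZMod l)) : μ = 1 := by
  ext i
  by_cases hi : i = 0
  · rw [hi, hμ0, Equiv.Perm.one_apply]
  · have hμi : μ i ≠ 0 := fun h => hi (μ.injective (h.trans hμ0.symm))
    have hcast : ((μ i : ℕ) : ZMod l) = ((i : ℕ) : ZMod l) := by
      rw [← hf (μ i) hμi, ← hfμ i hi, hμ0]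
    exact congrArg Fin.val (Fin.natCast_zmod_injective hkl hcast)

lemma sub_eq_of_mem_restrict_Rrel {n l k : ℕ} [NeZero l] [NeZero k] {hkl : k ≤ l}
    {j : ZMod n} {s : Fin k → TorusPt n l} (hs : s ∈ restrict hkl (Rrel n l j))
    (i : Fin k) (hi : i ≠ 0) :
    (s i).2.1 - (s 0).2.1 = ((i : ℕ) : ZMod l) ∧ (s i).2.2 - (s 0).2.2 = 1 := by
  obtain ⟨t, ht, hst⟩ := hs
  have hcast0 : Fin.castLE hkl (0 : Fin k) = 0 := rfl
  have hcasti : Fin.castLE hkl i ≠ 0 := by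
    rwa [← hcast0, Ne, Fin.castLE_inj]
  obtain ⟨-, hsnd, hthd⟩ := ht (Fin.castLE hkl i) hcasti
  rw [hst i, hst 0, hcast0]
  exact ⟨hsnd, hthd⟩

theorem stmt3_general (n l k : ℕ) [NeZero l]
    (hk : 2 ≤ k) (hkl : k ≤ l) (j : ZMod n)
    (s : Fin k → TorusPt n l) (hs : s ∈ restrict hkl (Rrel n l j))
    (μ : Equiv.Perm (Fin k)) (hμ : μ ≠ 1) :
    (fun m => s (μ m)) ∉ restrict hkl (Rrel n l j) := by
  intro hsμ
  have : NeZero k := ⟨by omega⟩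
  have hμ0 : μ 0 = 0 :=
    Equiv.Perm.apply_eq_self_of_sub_eq (c := (1 : ZMod 3)) (by decide)
      (fun i hi => (sub_eq_of_mem_restrict_Rrel hs i hi).2)
      (fun i hi => (sub_eq_of_mem_restrict_Rrel hsμ i hi).2)
  exact hμ (Equiv.Perm.eq_one_of_sub_eq_natCast hkl hμ0
    (fun i hi => (sub_eq_of_mem_restrict_Rrel hs i hi).1)
    (fun i hi => (sub_eq_of_mem_restrict_Rrel hsμ i hi).1))

theorem stmt3 (n l k : ℕ) [NeZero n] [NeZero l] (hn : 2 ≤ n) (hl : 2 ≤ l)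
    (hk : 2 ≤ k) (hkl : k ≤ l) (j : ZMod n)
    (s : Fin k → TorusPt n l) (hs : s ∈ restrict hkl (Rrel n l j))
    (μ : Equiv.Perm (Fin k)) (hμ : μ ≠ 1) :
    (fun m => s (μ m)) ∉ restrict hkl (Rrel n l j) :=
  stmt3_general n l k hk hkl j s hs μ hμ
end

section
/- Let M be a structure with two binary relations H and V, and suppose M satisfies: (1) for every x there is y with H(x,y); (2) for every x there is y with V(x,y); (3) for all x,y,z,w, if H(x,y), V(x,z), and H(z,w), then V(y,w). Then there exists a function h : ℕ × ℕ → M such that H(h(i,j), h(i+1,j)) holds for all i,j ∈ ℕ and V(h(i,j), h(i,j+1)) holds for all i,j ∈ ℕ (i.e., h is a homomorphism from the standard grid on ℕ × ℕ into M). -/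
/-! Pick successor functions `f` for `H` and `g` for `V`. Axiom (3) says exactly that `f` maps
`V`-edges to `V`-edges, so `(i, j) ↦ fⁱ (gʲ x₀)` is a grid homomorphism. -/

theorem Function.iterate_map_rel_of_square {M : Type*} {H V : M → M → Prop}
    (hsq : ∀ x y z w, H x y → V x z → H z w → V y w) {f : M → M} (hf : ∀ x, H x (f x))
    {y z : M} (hyz : V y z) (i : ℕ) : V (f^[i] y) (f^[i] z) := by
  induction i with
  | zero => exact hyz
  | succ n ih =>
    simpa only [Function.iterate_succ_apply'] using hsq _ _ _ _ (hf _) ih (hf _)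

theorem stmt5 (M : Type*) [Nonempty M] (H V : M → M → Prop)
    (h1 : ∀ x, ∃ y, H x y)
    (h2 : ∀ x, ∃ y, V x y)
    (h3 : ∀ x y z w, H x y → V x z → H z w → V y w) :
    ∃ h : ℕ × ℕ → M,
      (∀ i j : ℕ, H (h (i, j)) (h (i + 1, j))) ∧
      (∀ i j : ℕ, V (h (i, j)) (h (i, j + 1))) := by
  choose f hf using h1
  choose g hg using h2
  obtain ⟨x₀⟩ := ‹Nonempty M›
  refine ⟨fun p => f^[p.1] (g^[p.2] x₀), fun i j => ?_, fun i j => ?_⟩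
  · simpa only [Function.iterate_succ_apply'] using hf _
  · simpa only [Function.iterate_succ_apply'] using
      Function.iterate_map_rel_of_square h3 hf (hg _) i
end

section
/- Let T be a finite set of tiles, where a tile t assigns colours t_R, t_L, t_T, t_B. Suppose there exists a structure M on domain M with binary relations H, V and unary predicates (P_t)_{t ∈ T} satisfying: (1) ∀x∃y H(x,y); (2) ∀x∃y V(x,y); (3) ∀x,y,z,w (H(x,y) ∧ V(x,z) ∧ H(z,w) → V(y,w)); (4) every element satisfies exactly one P_t; (5) for all tiles t,t' with t_R ≠ t'_L and all x,y, P_t(x) ∧ P_{t'}(y) implies ¬H(x,y); (6) for all tiles t,t' with t_T ≠ t'_B and all x,y, P_t(x) ∧ P_{t'}(y) implies ¬V(x,y). Then there exists a T-tiling of ℕ × ℕ, i.e., a function f : ℕ × ℕ → T with f(i,j)_R = f(i+1,j)_L and f(i,j)_T = f(i,j+1)_B for all i,j. -/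
/-! Following successor functions for `H` and `V` from a base point lays out a copy of the grid
`ℕ × ℕ` inside `M`: the square-closing axiom (3) makes the vertical steps persist along every row.
Reading off the unique tile of each grid point gives a tiling, since (5) and (6) forbid mismatched
colours across `H`- and `V`-edges. -/

section Grid

variable {M : Type*} {H V : M → M → Prop}

lemma exists_grid_of_total_of_square (hH : ∀ x, ∃ y, H x y) (hV : ∀ x, ∃ y, V x y)
    (hsq : ∀ x y z w, H x y → V x z → H z w → V y w) (x₀ : M) :
    ∃ g : ℕ × ℕ → M, ∀ i j, H (g (i, j)) (g (i + 1, j)) ∧ V (g (i, j)) (g (i, j + 1)) := by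
  choose right hright using hH
  choose up hup using hV
  refine ⟨fun p => right^[p.1] (up^[p.2] x₀), fun i j => ?_⟩
  have hrow : ∀ i j, H (right^[i] (up^[j] x₀)) (right^[i + 1] (up^[j] x₀)) := fun i j => by
    rw [Function.iterate_succ_apply']
    exact hright _
  refine ⟨hrow i j, ?_⟩
  induction i with
  | zero => simpa [Function.iterate_succ_apply'] using hup (up^[j] x₀)
  | succ i ih => exact hsq _ _ _ _ (hrow i j) ih (hrow i (j + 1))

end Grid

theorem stmt7_general {C Tl M : Type*}
    (tR tL tT tB : Tl → C)
    (H V : M → M → Prop) (P : Tl → M → Prop)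
    (h1 : ∀ x, ∃ y, H x y)
    (h2 : ∀ x, ∃ y, V x y)
    (h3 : ∀ x y z w, H x y → V x z → H z w → V y w)
    (h4 : ∀ x, ∃! t, P t x)
    (h5 : ∀ t t', tR t ≠ tL t' → ∀ x y, P t x → P t' y → ¬ H x y)
    (h6 : ∀ t t', tT t ≠ tB t' → ∀ x y, P t x → P t' y → ¬ V x y)
    [Nonempty M] :
    ∃ f : ℕ × ℕ → Tl, ∀ i j : ℕ,
      tR (f (i, j)) = tL (f (i + 1, j)) ∧ tT (f (i, j)) = tB (f (i, j + 1)) := by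
  obtain ⟨g, hg⟩ := exists_grid_of_total_of_square h1 h2 h3 (Classical.arbitrary M)
  choose tile htile using fun x => (h4 x).exists
  refine ⟨tile ∘ g, fun i j => ⟨?_, ?_⟩⟩
  · by_contra hne
    exact h5 _ _ hne _ _ (htile _) (htile _) (hg i j).1
  · by_contra hne
    exact h6 _ _ hne _ _ (htile _) (htile _) (hg i j).2

theorem stmt7 {C Tl M : Type*} [Fintype Tl]
    (tR tL tT tB : Tl → C)
    (H V : M → M → Prop) (P : Tl → M → Prop)
    (h1 : ∀ x, ∃ y, H x y)
    (h2 : ∀ x, ∃ y, V x y)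
    (h3 : ∀ x y z w, H x y → V x z → H z w → V y w)
    (h4 : ∀ x, ∃! t, P t x)
    (h5 : ∀ t t', tR t ≠ tL t' → ∀ x y, P t x → P t' y → ¬ H x y)
    (h6 : ∀ t t', tT t ≠ tB t' → ∀ x y, P t x → P t' y → ¬ V x y)
    [Nonempty M] :
    ∃ f : ℕ × ℕ → Tl, ∀ i j : ℕ,
      tR (f (i, j)) = tL (f (i + 1, j)) ∧ tT (f (i, j)) = tB (f (i, j + 1)) :=
  stmt7_general tR tL tT tB H V P h1 h2 h3 h4 h5 h6
end
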